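/- arXiv:1812.05192 — 3 statements merged into one kernel-verified Lean document; each statement's English description precedes it below -/
import Mathlib

section
/- The special linear group SL(2,3) is solvable but not metabelian, and it satisfies |{x ∈ SL(2,3) : x^m = 1}| ≤ m² for every divisor m of its exponent 12; that is, SL(2,3) is a solvable non-metabelian Q-group. -/
/-!
The elements of `SL(2, 3)` whose fourth power is trivial form the quaternion group `Q₈`. Every
commutator lies in `Q₈`, a `2`-group and hence nilpotent, so `SL(2, 3)` is solvable. The commutators
of the upper transvection with the lower one and with its inverse do not commute, so the derived
subgroup is not abelian. The `Q`-group bound is a finite count for each divisor `m` of `12`; it is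
sharp at `m = 3`, where the identity and the eight elements of order `3` give exactly `9` solutions.
-/

open scoped MatrixGroups commutatorElement

theorem Group.isSolvable_of_commutator_le {G : Type*} [Group G] (H : Subgroup G)
    [Group.IsSolvable H] (hH : commutator G ≤ H) : Group.IsSolvable G :=
  Group.isSolvable_of_ker_le_range H.subtype Abelianization.of
    (by rwa [Abelianization.ker_of, H.range_subtype])

theorem not_forall_mul_comm_commutator {G : Type*} [Group G] {a b c d : G}
    (h : ⁅a, b⁆ * ⁅c, d⁆ ≠ ⁅c, d⁆ * ⁅a, b⁆) :
    ¬ ∀ x y : commutator G, x * y = y * x := fun hcomm =>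
  h <| congrArg Subtype.val <|
    hcomm ⟨_, Subgroup.commutator_mem_commutator (Subgroup.mem_top a) (Subgroup.mem_top b)⟩
      ⟨_, Subgroup.commutator_mem_commutator (Subgroup.mem_top c) (Subgroup.mem_top d)⟩

def IsQGroup (G : Type*) [Group G] : Prop :=
  ∀ m : ℕ, m ∣ Monoid.exponent G → Nat.card {x : G // x ^ m = 1} ≤ m ^ 2

namespace SL23

def quaternion : Subgroup SL(2, ZMod 3) where
  carrier := {x | x ^ 4 = 1}
  one_mem' := one_pow 4
  mul_mem' := by decide
  inv_mem' {x} hx := by simp_all [inv_pow]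

theorem isPGroup_quaternion : IsPGroup 2 quaternion := fun x => ⟨2, Subtype.ext x.2⟩

theorem commutatorElement_pow_four : ∀ a b : SL(2, ZMod 3), ⁅a, b⁆ ^ 4 = 1 := by decide

theorem commutator_le_quaternion : commutator SL(2, ZMod 3) ≤ quaternion :=
  Subgroup.commutator_le.mpr fun a _ b _ => commutatorElement_pow_four a b

instance isSolvable : Group.IsSolvable SL(2, ZMod 3) :=
  have := isPGroup_quaternion.isNilpotent
  Group.isSolvable_of_commutator_le quaternion commutator_le_quaternion

def upperTransvection : SL(2, ZMod 3) := ⟨!![1, 1; 0, 1], by decide⟩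

def lowerTransvection : SL(2, ZMod 3) := ⟨!![1, 0; 1, 1], by decide⟩

theorem commutatorElement_transvection_mul_ne :
    ⁅upperTransvection, lowerTransvection⁆ * ⁅upperTransvection, lowerTransvection⁻¹⁆ ≠
      ⁅upperTransvection, lowerTransvection⁻¹⁆ * ⁅upperTransvection, lowerTransvection⁆ := by
  decide

theorem exponent_dvd : Monoid.exponent SL(2, ZMod 3) ∣ 12 :=
  Monoid.exponent_dvd_of_forall_pow_eq_one (by decide)

theorem card_pow_eq_one_le : ∀ m ∈ Nat.divisors 12,
    Fintype.card {x : SL(2, ZMod 3) // x ^ m = 1} ≤ m ^ 2 := by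
  decide

theorem isQGroup : IsQGroup SL(2, ZMod 3) := fun m hm => by
  rw [Nat.card_eq_fintype_card]
  exact card_pow_eq_one_le m (Nat.mem_divisors.mpr ⟨hm.trans exponent_dvd, by norm_num⟩)

end SL23

theorem sl2_3_solvable_nonmetabelian_Q_group :
    IsSolvable (Matrix.SpecialLinearGroup (Fin 2) (ZMod 3)) ∧
    ¬ (∀ x y : ↥(commutator (Matrix.SpecialLinearGroup (Fin 2) (ZMod 3))), x * y = y * x) ∧
    (∀ m : ℕ, m ∣ Monoid.exponent (Matrix.SpecialLinearGroup (Fin 2) (ZMod 3)) →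
      Nat.card {x : Matrix.SpecialLinearGroup (Fin 2) (ZMod 3) // x ^ m = 1} ≤ m ^ 2) :=
  ⟨SL23.isSolvable, not_forall_mul_comm_commutator SL23.commutatorElement_transvection_mul_ne,
    SL23.isQGroup⟩
end

section
/- The group C_h × Q8 for h odd satisfies |{x : x^m = 1}| ≤ 2m for all divisors m of its exponent 4h. -/
open Multiplicative

/-- The `k`-torsion of `ZMod h` has at most `k` elements when `k ∣ h`. -/
lemma smul_torsion_card_le (h k : ℕ) (hh : 0 < h) (hk : k ∣ h) (hk0 : 0 < k) :
    Nat.card {a : ZMod h // k • a = 0} ≤ k := by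
  haveI : NeZero h := ⟨hh.ne'⟩
  have hdk : 0 < h / k := Nat.div_pos (Nat.le_of_dvd hh hk) hk0
  have key : ∀ j : ℕ, k • ((j * (h / k) : ℕ) : ZMod h) = 0 := by
    intro j
    have hcalc : k * (j * (h / k)) = j * h := by
      rw [mul_left_comm, Nat.mul_div_cancel' hk]
    rw [nsmul_eq_mul, ← Nat.cast_mul, hcalc, Nat.cast_mul, ZMod.natCast_self, mul_zero]
  haveI : NeZero k := ⟨hk0.ne'⟩
  set F : ZMod k → {a : ZMod h // k • a = 0} :=
    fun j => ⟨((j.val * (h / k) : ℕ) : ZMod h), key _⟩ with hF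
  have hsurj : Function.Surjective F := by
    rintro ⟨a, ha⟩
    have haval : (a.val : ZMod h) = a := by
      rw [ZMod.natCast_val, ZMod.cast_id]
    have hdvd : h ∣ k * a.val := by
      rw [← ZMod.natCast_eq_zero_iff, Nat.cast_mul, haval, ← nsmul_eq_mul, ha]
    have hdvd2 : k * (h / k) ∣ k * a.val := by rwa [Nat.mul_div_cancel' hk]
    have hdvd' : (h / k) ∣ a.val := (mul_dvd_mul_iff_left hk0.ne').mp hdvd2
    set j := a.val / (h / k) with hj
    have hjk : j < k := by
      rw [hj, Nat.div_lt_iff_lt_mul hdk, mul_comm k (h / k), Nat.div_mul_cancel hk]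
      exact ZMod.val_lt a
    refine ⟨(j : ZMod k), ?_⟩
    apply Subtype.ext
    show (((j : ZMod k).val * (h / k) : ℕ) : ZMod h) = a
    rw [ZMod.val_cast_of_lt hjk, hj, Nat.div_mul_cancel hdvd', haval]
  calc Nat.card {a : ZMod h // k • a = 0} ≤ Nat.card (ZMod k) :=
        Nat.card_le_card_of_surjective F hsurj
    _ = k := Nat.card_zmod k

theorem ch_times_q8_f_le_two (h : ℕ) (hh : Odd h)
    (m : ℕ) (hm : m ∣ Monoid.exponent (Multiplicative (ZMod h) × QuaternionGroup 2)) :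
    Nat.card {x : Multiplicative (ZMod h) × QuaternionGroup 2 // x ^ m = 1} ≤ 2 * m := by
  have hpos : 0 < h := hh.pos
  haveI : NeZero h := ⟨hpos.ne'⟩
  -- exponent of Q8 is 4
  have hQ4 : ∀ b : QuaternionGroup 2, b ^ 4 = 1 := by
    intro b
    have := Monoid.pow_exponent_eq_one b
    rwa [QuaternionGroup.exponent, show 2 * lcm 2 2 = 4 by norm_num [Nat.lcm]] at this
  -- the exponent of the product divides 4h
  have hexp : Monoid.exponent (Multiplicative (ZMod h) × QuaternionGroup 2) ∣ 4 * h := by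
    rw [Monoid.exponent_dvd_iff_forall_pow_eq_one]
    intro g
    have h1 : g.1 ^ (4 * h) = 1 := by
      have : ((4 * h : ℕ) • g.1.toAdd : ZMod h) = 0 := by
        rw [nsmul_eq_mul, Nat.cast_mul, ZMod.natCast_self, mul_zero, zero_mul]
      apply toAdd.injective
      rw [toAdd_pow, this, toAdd_one]
    have h2 : g.2 ^ (4 * h) = 1 := by
      rw [pow_mul, hQ4, one_pow]
    rw [Prod.pow_def, h1, h2, Prod.mk_one_one]
  have hm4h : m ∣ 4 * h := hm.trans hexp
  have hm0 : m ≠ 0 := by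
    rintro rfl
    rw [zero_dvd_iff] at hm4h
    omega
  -- split the count over the two factors
  have e : {x : Multiplicative (ZMod h) × QuaternionGroup 2 // x ^ m = 1} ≃
      {a : ZMod h // m • a = 0} × {b : QuaternionGroup 2 // b ^ m = 1} := by
    refine (Equiv.subtypeEquivRight ?_).trans
      ((Equiv.subtypeProdEquivProd (p := fun a : Multiplicative (ZMod h) => a ^ m = 1)
        (q := fun b : QuaternionGroup 2 => b ^ m = 1)).trans
      (Equiv.prodCongr (Equiv.subtypeEquiv Multiplicative.toAdd ?_) (Equiv.refl _)))
    · intro x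
      rw [Prod.pow_def, Prod.ext_iff]
      rfl
    · intro a
      constructor
      · intro ha; rw [← toAdd_pow, ha, toAdd_one]
      · intro ha; apply toAdd.injective; rw [toAdd_pow, ha, toAdd_one]
  rw [Nat.card_congr e, Nat.card_prod]
  by_cases h4 : 4 ∣ m
  · -- m = 4k with k ∣ h; count is (≤ k) * (≤ 8)
    obtain ⟨k, rfl⟩ := h4
    have hk0 : 0 < k := Nat.pos_of_ne_zero (by rintro rfl; simp at hm0)
    have hkh : k ∣ h := (mul_dvd_mul_iff_left (by norm_num : (4:ℕ) ≠ 0)).mp hm4h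
    have h4u : IsUnit ((4:ℕ) : ZMod h) := (ZMod.isUnit_iff_coprime 4 h).mpr
      (by have := Nat.Coprime.pow_left 2 hh.coprime_two_left; norm_num at this ⊢; exact this)
    have hiff : ∀ a : ZMod h, (4 * k) • a = 0 ↔ k • a = 0 := by
      intro a
      constructor
      · intro ha
        rw [mul_smul, nsmul_eq_mul] at ha
        have ha' : ((4:ℕ) : ZMod h) * (k • a) = 0 := by
          rw [Nat.cast_ofNat]; exact_mod_cast ha
        exact (h4u.mul_right_eq_zero).mp ha'
      · intro ha
        rw [mul_smul, ha, smul_zero]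
    have hA : Nat.card {a : ZMod h // (4 * k) • a = 0} ≤ k := by
      rw [Nat.card_congr (Equiv.subtypeEquivRight hiff)]
      exact smul_torsion_card_le h k hpos hkh hk0
    have hB : Nat.card {b : QuaternionGroup 2 // b ^ (4 * k) = 1} ≤ 8 := by
      calc Nat.card {b : QuaternionGroup 2 // b ^ (4 * k) = 1}
          ≤ Nat.card (QuaternionGroup 2) :=
            Nat.card_le_card_of_injective Subtype.val Subtype.val_injective
        _ = 8 := by rw [Nat.card_eq_fintype_card, QuaternionGroup.card]
    calc Nat.card {a : ZMod h // (4 * k) • a = 0} *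
          Nat.card {b : QuaternionGroup 2 // b ^ (4 * k) = 1}
        ≤ k * 8 := Nat.mul_le_mul hA hB
      _ = 2 * (4 * k) := by ring
  · -- 4 ∤ m : Q8 part has ≤ 2 elements, ZMod part ≤ gcd m h ≤ m
    have hA : Nat.card {a : ZMod h // m • a = 0} ≤ Nat.gcd m h := by
      have hstep : ∀ a : {a : ZMod h // m • a = 0}, Nat.gcd m h • (a : ZMod h) = 0 := by
        rintro ⟨a, ha⟩
        have hh0 : h • a = 0 := by
          rw [nsmul_eq_mul, ZMod.natCast_self, zero_mul]
        have : addOrderOf a ∣ Nat.gcd m h :=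
          Nat.dvd_gcd (addOrderOf_dvd_of_nsmul_eq_zero ha)
            (addOrderOf_dvd_of_nsmul_eq_zero hh0)
        exact (addOrderOf_dvd_iff_nsmul_eq_zero).mp this
      have hinj : Function.Injective
          (fun a : {a : ZMod h // m • a = 0} => (⟨a.1, hstep a⟩ : {a : ZMod h // Nat.gcd m h • a = 0})) := by
        intro x y hxy
        simp only [Subtype.mk.injEq] at hxy
        exact Subtype.ext hxy
      calc Nat.card {a : ZMod h // m • a = 0}
          ≤ Nat.card {a : ZMod h // Nat.gcd m h • a = 0} :=
            Nat.card_le_card_of_injective _ hinj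
        _ ≤ Nat.gcd m h := smul_torsion_card_le h _ hpos (Nat.gcd_dvd_right m h)
            (Nat.gcd_pos_of_pos_left h (Nat.pos_of_ne_zero hm0))
    have hB : Nat.card {b : QuaternionGroup 2 // b ^ m = 1} ≤ 2 := by
      have hstep : ∀ b : {b : QuaternionGroup 2 // b ^ m = 1}, (b : QuaternionGroup 2) ^ 2 = 1 := by
        rintro ⟨b, hb⟩
        have hord : orderOf b ∣ Nat.gcd m 4 := by
          refine Nat.dvd_gcd (orderOf_dvd_of_pow_eq_one hb) ?_
          exact orderOf_dvd_of_pow_eq_one (hQ4 b)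
        have hd2 : Nat.gcd m 4 ∣ 2 := by
          have hd4 : Nat.gcd m 4 ∣ 4 := Nat.gcd_dvd_right m 4
          have hdm : Nat.gcd m 4 ∣ m := Nat.gcd_dvd_left m 4
          have hnd : ¬ (4 ∣ Nat.gcd m 4) := fun hc => h4 (hc.trans hdm)
          obtain ⟨d, hd⟩ : ∃ d, Nat.gcd m 4 = d := ⟨_, rfl⟩
          rw [hd] at hd4 hnd ⊢
          have hle : d ≤ 4 := Nat.le_of_dvd (by norm_num) hd4
          interval_cases d <;> omega
        exact orderOf_dvd_iff_pow_eq_one.mp (hord.trans hd2)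
      have hinj : Function.Injective
          (fun b : {b : QuaternionGroup 2 // b ^ m = 1} =>
            (⟨b.1, hstep b⟩ : {b : QuaternionGroup 2 // b ^ 2 = 1})) := by
        intro x y hxy
        simp only [Subtype.mk.injEq] at hxy
        exact Subtype.ext hxy
      calc Nat.card {b : QuaternionGroup 2 // b ^ m = 1}
          ≤ Nat.card {b : QuaternionGroup 2 // b ^ 2 = 1} :=
            Nat.card_le_card_of_injective _ hinj
        _ ≤ 2 := by
            rw [Nat.card_eq_fintype_card]
            decide
    calc Nat.card {a : ZMod h // m • a = 0} * Nat.card {b : QuaternionGroup 2 // b ^ m = 1}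
        ≤ Nat.gcd m h * 2 := Nat.mul_le_mul hA hB
      _ ≤ m * 2 := Nat.mul_le_mul_right 2 (Nat.gcd_le_left h (Nat.pos_of_ne_zero hm0))
      _ = 2 * m := by ring
end

section
/- For a finite group G with f(m) = |{x ∈ G : x^m = 1}|/m, if f(m) ≤ 2 for all divisors m of exp(G), then f(m) ≤ 2 also holds for all divisors m of |G|. -/
theorem f_le_two_extends_to_card_divisors (G : Type*) [Group G] [Finite G]
    (h : ∀ m : ℕ, m ∣ Monoid.exponent G → Nat.card {x : G // x ^ m = 1} ≤ 2 * m) :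
    ∀ m : ℕ, m ∣ Nat.card G → Nat.card {x : G // x ^ m = 1} ≤ 2 * m := by
  intro m hm
  have hmpos : 0 < m := Nat.pos_of_dvd_of_pos hm Nat.card_pos
  set d := Nat.gcd m (Monoid.exponent G) with hd
  have hset : ∀ x : G, x ^ m = 1 ↔ x ^ d = 1 := by
    intro x
    constructor
    · intro hx
      have h1 : orderOf x ∣ m := orderOf_dvd_of_pow_eq_one hx
      have h2 : orderOf x ∣ Monoid.exponent G := Monoid.order_dvd_exponent x
      exact orderOf_dvd_iff_pow_eq_one.mp (Nat.dvd_gcd h1 h2)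
    · intro hx
      exact orderOf_dvd_iff_pow_eq_one.mp
        ((orderOf_dvd_of_pow_eq_one hx).trans (Nat.gcd_dvd_left _ _))
  have hcard : Nat.card {x : G // x ^ m = 1} = Nat.card {x : G // x ^ d = 1} := by
    apply Nat.card_congr
    exact Equiv.subtypeEquiv (Equiv.refl G) (fun x => hset x)
  rw [hcard]
  calc Nat.card {x : G // x ^ d = 1} ≤ 2 * d := h d (Nat.gcd_dvd_right _ _)
    _ ≤ 2 * m := by
        have : d ∣ m := Nat.gcd_dvd_left _ _
        exact Nat.mul_le_mul_left 2 (Nat.le_of_dvd hmpos this)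
end
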